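/- For the scale-invariant losses f_1, f_2 of Theorem 1 evaluated on the unit sphere, the difference of gradients satisfies ‖g_1 − g_2‖² = 4 sin² α cos² α (x² + y² − 4x²y²). -/

import Mathlib

open Real

/-! On the unit sphere the gradient of the scale-invariant loss `½⟪a, w⟫² / ‖w‖²` is
`⟪a, v⟫ a - ⟪a, v⟫² v`, the radial part being subtracted. Both losses are of this form, with
`a = (cos α, ± sin α, 0)`, and the claim is the resulting polynomial identity in the
coordinates of `v`, reduced modulo `x² + y² + z² = 1`. -/

theorem hasGradientAt_half_inner_sq_div_norm_sq {E : Type*} [NormedAddCommGroup E]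
    [InnerProductSpace ℝ E] [CompleteSpace E] (a v : E) (hv : ‖v‖ = 1) :
    HasGradientAt (fun w => 1 / 2 * inner ℝ a w ^ 2 / ‖w‖ ^ 2)
      (inner ℝ a v • a - inner ℝ a v ^ 2 • v) v := by
  have hnum := (((innerSL ℝ a).hasFDerivAt (x := v)).pow 2).const_mul (1 / 2 : ℝ)
  have hden := (hasDerivAt_inv (by simp [hv])).comp_hasFDerivAt v
    (hasStrictFDerivAt_norm_sq v).hasFDerivAt
  have h := hnum.mul hden
  simp only [Function.comp_def, innerSL_apply_apply] at h
  rw [hasGradientAt_iff_hasFDerivAt]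
  refine h.congr_fderiv ?_
  ext w
  simp [hv]
  ring

namespace EuclideanSpace

theorem real_inner_fin_three (u v : EuclideanSpace ℝ (Fin 3)) :
    inner ℝ u v = u 0 * v 0 + u 1 * v 1 + u 2 * v 2 := by
  simp [PiLp.inner_apply, Fin.sum_univ_three, mul_comm]

theorem real_norm_sq_fin_three (v : EuclideanSpace ℝ (Fin 3)) :
    ‖v‖ ^ 2 = v 0 ^ 2 + v 1 ^ 2 + v 2 ^ 2 := by
  rw [real_norm_sq_eq, Fin.sum_univ_three]

end EuclideanSpace

theorem norm_sq_grad_diff_general (α : ℝ)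
    (f₁ f₂ : EuclideanSpace ℝ (Fin 3) → ℝ)
    (hf₁ : ∀ v : EuclideanSpace ℝ (Fin 3),
      f₁ v = (1 / 2) * (v 0 * cos α + v 1 * sin α) ^ 2
        / ((v 0) ^ 2 + (v 1) ^ 2 + (v 2) ^ 2))
    (hf₂ : ∀ v : EuclideanSpace ℝ (Fin 3),
      f₂ v = (1 / 2) * (v 0 * cos α - v 1 * sin α) ^ 2
        / ((v 0) ^ 2 + (v 1) ^ 2 + (v 2) ^ 2))
    (v : EuclideanSpace ℝ (Fin 3)) (hv : (v 0) ^ 2 + (v 1) ^ 2 + (v 2) ^ 2 = 1) :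
    ‖gradient f₁ v - gradient f₂ v‖ ^ 2
      = 4 * sin α ^ 2 * cos α ^ 2
          * ((v 0) ^ 2 + (v 1) ^ 2 - 4 * (v 0) ^ 2 * (v 1) ^ 2) := by
  have hf₁' : f₁ = fun w => 1 / 2 * inner ℝ !₂[cos α, sin α, 0] w ^ 2 / ‖w‖ ^ 2 := by
    ext w
    simp [hf₁, EuclideanSpace.real_inner_fin_three, EuclideanSpace.real_norm_sq_fin_three,
      mul_comm]
  have hf₂' : f₂ = fun w => 1 / 2 * inner ℝ !₂[cos α, -sin α, 0] w ^ 2 / ‖w‖ ^ 2 := by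
    ext w
    simp [hf₂, EuclideanSpace.real_inner_fin_three, EuclideanSpace.real_norm_sq_fin_three,
      mul_comm, sub_eq_add_neg]
  have hunit : ‖v‖ = 1 := by
    rw [← pow_eq_one_iff_of_nonneg (norm_nonneg v) two_ne_zero,
      EuclideanSpace.real_norm_sq_fin_three, hv]
  rw [hf₁', hf₂', (hasGradientAt_half_inner_sq_div_norm_sq _ v hunit).gradient,
    (hasGradientAt_half_inner_sq_div_norm_sq _ v hunit).gradient,
    EuclideanSpace.real_norm_sq_fin_three]
  simp only [EuclideanSpace.real_inner_fin_three, PiLp.sub_apply, PiLp.smul_apply, smul_eq_mul,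
    Matrix.cons_val_zero, Matrix.cons_val_one, Matrix.cons_val]
  linear_combination (16 * sin α ^ 2 * cos α ^ 2 * v 0 ^ 2 * v 1 ^ 2) * hv

/-- For the scale-invariant losses `f₁, f₂` on the unit sphere, the squared norm
of the difference of gradients is
`‖g₁ − g₂‖² = 4 sin² α cos² α (x² + y² − 4x²y²)`. -/
theorem norm_sq_grad_diff (α : ℝ) (hα : 0 < α ∧ α < π / 4)
    (f₁ f₂ : EuclideanSpace ℝ (Fin 3) → ℝ)
    (hf₁ : ∀ v : EuclideanSpace ℝ (Fin 3),
      f₁ v = (1 / 2) * (v 0 * cos α + v 1 * sin α) ^ 2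
        / ((v 0) ^ 2 + (v 1) ^ 2 + (v 2) ^ 2))
    (hf₂ : ∀ v : EuclideanSpace ℝ (Fin 3),
      f₂ v = (1 / 2) * (v 0 * cos α - v 1 * sin α) ^ 2
        / ((v 0) ^ 2 + (v 1) ^ 2 + (v 2) ^ 2))
    (v : EuclideanSpace ℝ (Fin 3)) (hv : (v 0) ^ 2 + (v 1) ^ 2 + (v 2) ^ 2 = 1) :
    ‖gradient f₁ v - gradient f₂ v‖ ^ 2
      = 4 * sin α ^ 2 * cos α ^ 2
          * ((v 0) ^ 2 + (v 1) ^ 2 - 4 * (v 0) ^ 2 * (v 1) ^ 2) :=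
  norm_sq_grad_diff_general α f₁ f₂ hf₁ hf₂ v hv
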